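/- arXiv:1603.02304 — 2 statements merged into one kernel-verified Lean document; each statement's English description precedes it below -/
import Mathlib

section
/- For all integers p,q ≥ 1, writing m = |p-q| and ν = min{p,q} - 1, one has for every ζ ∈ ℂ the explicit expansion φ^{(p,q)}(ζ) = ((-1)^{q+ν+1}/q)·(1-ζ·conj ζ)·ζ^{m+ν-q+1}·(conj ζ)^{m+ν-p+1}·Σ_{j=0}^{ν} (-1)^j ((j+ν+m+1)!/(j!(j+m)!(ν-j)!))·(ζ·conj ζ)^j. -/
/-!
Expand `(1 - XY)^n`, `n = p + q - 1`, binomially: `∂_Y^p ∂_X^q` sends `(XY)^k` to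
`k^(q) k^(p) X^(k-q) Y^(k-p)` (falling factorials), which vanishes for `k < max p q`.
Writing `k = max p q + j` with `0 ≤ j ≤ ν`, the coefficient
`C(n,k) k^(q) k^(p) = n! k! / ((n-k)! (k-q)! (k-p)!)` has `{k-q, k-p} = {j, j+m}` and
`n - k = ν - j`; the `n!` cancels the normalisation of `φ^{(p,q)}`.
-/

/-- The bivariate polynomial `∂_Y^p ∂_X^q (1-XY)^{p+q-1}`, with `X = X 0`, `Y = X 1`. -/
noncomputable def scatteringD (p q : ℕ) : MvPolynomial (Fin 2) ℂ :=
  (fun P => MvPolynomial.pderiv (1 : Fin 2) P)^[p]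
    ((fun P => MvPolynomial.pderiv (0 : Fin 2) P)^[q]
      ((1 - MvPolynomial.X 0 * MvPolynomial.X 1) ^ (p + q - 1)))

/-- Scattering polynomial `φ^{(p,q)}`. -/
noncomputable def scatteringPhi (p q : ℤ) (ζ : ℂ) : ℂ :=
  if 1 ≤ p ∧ 1 ≤ q then
    ((-1 : ℂ) ^ p.toNat / ((q : ℂ) * (Nat.factorial (p.toNat + q.toNat - 1) : ℂ)))
      * (1 - ζ * (starRingEnd ℂ) ζ)
      * MvPolynomial.eval (fun i : Fin 2 => if i = 0 then ζ else (starRingEnd ℂ) ζ)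
          (scatteringD p.toNat q.toNat)
  else if 0 ≤ p ∧ q = 0 then ζ ^ p.toNat
  else 0

open MvPolynomial Finset
open scoped Nat

theorem Nat.cast_choose_mul_descFactorial_mul_descFactorial (K : Type*) [Field K] [CharZero K]
    {n k a b : ℕ} (hk : k ≤ n) (ha : a ≤ k) (hb : b ≤ k) :
    ((n.choose k * k.descFactorial a * k.descFactorial b : ℕ) : K)
      = n ! * k ! / ((n - k)! * (k - a)! * (k - b)!) := by
  have hdesc : ∀ c ≤ k, (k.descFactorial c : K) = k ! / (k - c)! := fun c hc => by
    rw [eq_div_iff (Nat.cast_ne_zero.mpr (Nat.factorial_ne_zero _)), mul_comm]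
    exact_mod_cast Nat.factorial_mul_descFactorial hc
  push_cast
  rw [Nat.cast_choose K hk, hdesc a ha, hdesc b hb]
  field_simp

namespace MvPolynomial

variable {R σ : Type*} [CommSemiring R]

theorem pderiv_pow_apply_X_pow_mul {i : σ} {Q : MvPolynomial σ R} (hQ : pderiv i Q = 0)
    (a t : ℕ) :
    ((pderiv i).toLinearMap ^ t) (X i ^ a * Q) = a.descFactorial t • (X i ^ (a - t) * Q) := by
  induction t with
  | zero => simp
  | succ t ih =>
    rw [pow_succ', Module.End.mul_apply, ih, map_nsmul, Derivation.coeFn_coe, pderiv_mul,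
      pderiv_pow, pderiv_X_self, hQ, Nat.descFactorial_succ, Nat.sub_sub]
    simp only [nsmul_eq_mul, Nat.cast_mul]
    ring

end MvPolynomial

theorem scatteringD_eq_sum (p q : ℕ) :
    scatteringD p q = ∑ k ∈ range (p + q - 1 + 1),
      ((-1 : ℂ) ^ k * ((p + q - 1).choose k * k.descFactorial q * k.descFactorial p : ℕ)) •
        (X 0 ^ (k - q) * X 1 ^ (k - p)) := by
  have hD : scatteringD p q = ((pderiv 1).toLinearMap ^ p)
      (((pderiv 0).toLinearMap ^ q) ((1 - X 0 * X 1) ^ (p + q - 1))) := by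
    rw [Module.End.pow_apply, Module.End.pow_apply]; rfl
  rw [hD, sub_eq_add_neg, add_comm, add_pow, map_sum, map_sum]
  refine sum_congr rfl fun k _ => ?_
  have hterm : (-(X 0 * X 1)) ^ k * 1 ^ (p + q - 1 - k)
        * ((p + q - 1).choose k : MvPolynomial (Fin 2) ℂ)
      = ((-1 : ℂ) ^ k * (p + q - 1).choose k) • (X 0 ^ k * X 1 ^ k) := by
    rw [smul_eq_C_mul, one_pow, mul_one, neg_pow, mul_pow, map_mul, map_pow, map_neg, map_one,
      map_natCast]
    ring
  have h0 : pderiv (0 : Fin 2) (X 1 ^ k : MvPolynomial (Fin 2) ℂ) = 0 := by simp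
  have h1 : pderiv (1 : Fin 2) (X 0 ^ (k - q) : MvPolynomial (Fin 2) ℂ) = 0 := by simp
  rw [hterm, map_smul, map_smul, pderiv_pow_apply_X_pow_mul h0, map_nsmul, mul_comm (X 0 ^ _),
    pderiv_pow_apply_X_pow_mul h1, mul_comm (X 1 ^ _), ← Nat.cast_smul_eq_nsmul ℂ,
    ← Nat.cast_smul_eq_nsmul ℂ, smul_smul, smul_smul]
  push_cast
  congr 1
  ring

theorem eval_scatteringD {p q : ℕ} (hp : 1 ≤ p) (hq : 1 ≤ q) {m ν : ℕ}
    (hm : m = max p q - min p q) (hν : ν = min p q - 1) (x : Fin 2 → ℂ) :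
    eval x (scatteringD p q) = (p + q - 1)! * (-1 : ℂ) ^ (m + ν + 1)
      * x 0 ^ (m + ν + 1 - q) * x 1 ^ (m + ν + 1 - p)
      * ∑ j ∈ range (ν + 1), (-1 : ℂ) ^ j
          * ((j + ν + m + 1)! / ((j ! : ℂ) * (j + m)! * (ν - j)!)) * (x 0 * x 1) ^ j := by
  rw [scatteringD_eq_sum, map_sum, show p + q - 1 + 1 = (m + ν + 1) + (ν + 1) by omega,
    sum_range_add, mul_sum]
  simp only [smul_eval, eval_mul, eval_pow, eval_X]
  have hlow : ∀ k ∈ range (m + ν + 1),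
      (-1 : ℂ) ^ k * ((p + q - 1).choose k * k.descFactorial q * k.descFactorial p : ℕ)
        * (x 0 ^ (k - q) * x 1 ^ (k - p)) = 0 := fun k hk => by
    rcases le_total p q with h | h
    · rw [Nat.descFactorial_of_lt (by have := mem_range.mp hk; omega : k < q)]; simp
    · rw [Nat.descFactorial_of_lt (by have := mem_range.mp hk; omega : k < p)]; simp
  rw [sum_eq_zero hlow, zero_add]
  refine sum_congr rfl fun j hj => ?_
  have hj : j ≤ ν := Nat.lt_succ_iff.mp (mem_range.mp hj)
  have hfac : (m + ν + 1 + j - q)! * (m + ν + 1 + j - p)! = j ! * (j + m)! := by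
    rcases le_total p q with h | h
    · rw [show m + ν + 1 + j - q = j by omega, show m + ν + 1 + j - p = j + m by omega]
    · rw [show m + ν + 1 + j - q = j + m by omega, show m + ν + 1 + j - p = j by omega, mul_comm]
  have hden : ((p + q - 1 - (m + ν + 1 + j))! * (m + ν + 1 + j - q)! * (m + ν + 1 + j - p)! : ℂ)
      = j ! * (j + m)! * (ν - j)! := by
    rw [show p + q - 1 - (m + ν + 1 + j) = ν - j by omega]
    norm_cast
    rw [mul_assoc, hfac, mul_comm]
  rw [Nat.cast_choose_mul_descFactorial_mul_descFactorial ℂ (by omega) (by omega) (by omega),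
    hden,
    show j + ν + m + 1 = m + ν + 1 + j by omega, pow_add, pow_add, pow_add, mul_pow,
    show m + ν + 1 + j - q = m + ν + 1 - q + j by omega,
    show m + ν + 1 + j - p = m + ν + 1 - p + j by omega, pow_add, pow_add]
  ring

/-- for integers `p,q ≥ 1`, with `m = |p-q|` and `ν = min{p,q} - 1`,
`φ^{(p,q)}(ζ) = ((-1)^{q+ν+1}/q)(1-ζζ̄)ζ^{m+ν-q+1}ζ̄^{m+ν-p+1}
  Σ_{j=0}^{ν} (-1)^j ((j+ν+m+1)!/(j!(j+m)!(ν-j)!))(ζζ̄)^j`. -/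
theorem statement4 (p q : ℕ) (hp : 1 ≤ p) (hq : 1 ≤ q) (m ν : ℕ)
    (hm : m = max p q - min p q) (hν : ν = min p q - 1) (ζ : ℂ) :
    scatteringPhi p q ζ =
      ((-1 : ℂ) ^ (q + ν + 1) / (q : ℂ)) * (1 - ζ * (starRingEnd ℂ) ζ)
        * ζ ^ (m + ν + 1 - q) * ((starRingEnd ℂ) ζ) ^ (m + ν + 1 - p)
        * ∑ j ∈ Finset.range (ν + 1),
            (-1 : ℂ) ^ j
              * ((Nat.factorial (j + ν + m + 1) : ℂ) /
                  ((Nat.factorial j : ℂ) * (Nat.factorial (j + m) : ℂ)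
                    * (Nat.factorial (ν - j) : ℂ)))
              * (ζ * (starRingEnd ℂ) ζ) ^ j := by
  have hsign : (-1 : ℂ) ^ p * (-1) ^ (m + ν + 1) = (-1) ^ (q + ν + 1) := by
    rw [← pow_add, show p + (m + ν + 1) = q + ν + 1 + 2 * (p - min p q) by omega, pow_add,
      pow_mul, neg_one_sq, one_pow, mul_one]
  have hq0 : (q : ℂ) ≠ 0 := Nat.cast_ne_zero.mpr (by omega)
  have hn0 : ((p + q - 1)! : ℂ) ≠ 0 := Nat.cast_ne_zero.mpr (Nat.factorial_ne_zero _)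
  rw [scatteringPhi, if_pos ⟨by exact_mod_cast hp, by exact_mod_cast hq⟩, Int.toNat_natCast,
    Int.toNat_natCast, eval_scatteringD hp hq hm hν, ← hsign]
  simp only [Int.cast_natCast, Fin.isValue, if_true, one_ne_zero, if_false]
  field_simp
end

section
/- Let n ≥ 1 and define U: D^n × ℝ^n → ℂ (where D ⊂ ℝ² is the open unit disk) by U(x_1,y_1,…,x_n,y_n,ξ_1,…,ξ_n) = Ψ((x_1+iy_1,…,x_n+iy_n),(e^{iξ_1},…,e^{iξ_n})). Then for every index 1 ≤ j ≤ n and every point of the domain, -((1-x_j²-y_j²)/4)·(∂²U/∂x_j² + ∂²U/∂y_j²) + ∂²U/∂ξ_{j+1}∂ξ_j = 0, where derivatives with respect to ξ_{n+1} are interpreted as 0 (so for j = n the second term is absent). -/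
/-!
Fix `j` and write `U = F (Ψ^{w}_{z}(v))` with `w = x_j + i y_j`, `z = e^{iξ_j}`, where `F` is the
composite of the maps of index `< j` (holomorphic on the disk) and `v` is the value of the maps
of index `> j`. Along a real line in `w` the map `Ψ^{w}_{z}(v)` is an affine fraction, and the
chain rule gives `Δ_w U = -4 Q` with `D = 1 + w̄ v`, `g = Ψ^{w}_{z}(v)` and
`Q = z v / D² · (F'(g) + g F''(g))`.
Rotating `z` by `e^{iθ}` rotates `g` by `e^{iθ}`, so `∂_{ξ_j} U = i g F'(g)`, and `∂_{ξ_{j+1}}`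
acts on `v` as `i v ∂_v`; hence `∂_{ξ_{j+1}} ∂_{ξ_j} U = -(1 - |w|²) Q`.
For the last index `v = 0`, so `Q = 0`.
-/

/-- `Ψ` composed over a list of `(w,z)` pairs, applied to `0`:
`PsiList [(w₁,z₁),…,(wₙ,zₙ)] = Ψ^{w₁}_{z₁} ∘ ⋯ ∘ Ψ^{wₙ}_{zₙ}(0)`, where
`Ψ^{w}_{z}(v) = z(v+w)/(1+conj(w)·v)`. -/
noncomputable def PsiList : List (ℂ × ℂ) → ℂ
  | [] => 0
  | wz :: rest => wz.2 * (PsiList rest + wz.1) / (1 + (starRingEnd ℂ) wz.1 * PsiList rest)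

/-- `U(x₁,y₁,…,xₙ,yₙ,ξ₁,…,ξₙ) = Ψ((x₁+iy₁,…,xₙ+iyₙ),(e^{iξ₁},…,e^{iξₙ}))`. -/
noncomputable def Ufun (n : ℕ) (x y ξ : Fin n → ℝ) : ℂ :=
  PsiList (List.ofFn fun j : Fin n =>
    ((x j : ℂ) + (y j : ℂ) * Complex.I, Complex.exp (Complex.I * (ξ j : ℂ))))

open Complex ComplexConjugate Metric Set Topology

/-- The paper's `Ψ^w_z`. -/
noncomputable def mobius (w z v : ℂ) : ℂ := z * (v + w) / (1 + conj w * v)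

noncomputable def mobiusComp (l : List (ℂ × ℂ)) (v : ℂ) : ℂ :=
  l.foldr (fun p u => mobius p.1 p.2 u) v

lemma PsiList_eq_mobiusComp (l : List (ℂ × ℂ)) : PsiList l = mobiusComp l 0 := by
  induction l with
  | nil => rfl
  | cons p l ih => rw [PsiList, ih]; rfl

lemma PsiList_set {l : List (ℂ × ℂ)} {j : ℕ} (hj : j < l.length) (p : ℂ × ℂ) :
    PsiList (l.set j p) = mobiusComp (l.take j) (mobius p.1 p.2 (PsiList (l.drop (j + 1)))) := by
  rw [List.set_eq_take_append_cons_drop, if_pos hj, PsiList_eq_mobiusComp,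
    PsiList_eq_mobiusComp (l.drop _), mobiusComp, List.foldr_append]
  rfl

lemma PsiList_set_set {l : List (ℂ × ℂ)} {j : ℕ} (hj : j + 1 < l.length) (p q : ℂ × ℂ) :
    PsiList ((l.set (j + 1) q).set j p) =
      mobiusComp (l.take j) (mobius p.1 p.2 (mobius q.1 q.2 (PsiList (l.drop (j + 2))))) := by
  rw [PsiList_set (by simp; omega), List.take_set_of_le (by omega), List.drop_set,
    if_neg (by omega), Nat.sub_self, PsiList_set (j := 0) (by simp; omega), List.take_zero,
    List.drop_drop]
  rfl

lemma List.ofFn_apply_update {α β : Type*} {n : ℕ} (f : Fin n → α → β) (g : Fin n → α)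
    (j : Fin n) (a : α) :
    List.ofFn (fun k => f k (Function.update g j a k)) =
      (List.ofFn fun k => f k (g k)).set j (f j a) := by
  refine List.ext_getElem (by simp) fun i h _ => ?_
  simp only [List.getElem_ofFn, List.getElem_set, Function.update_apply]
  by_cases hij : (j : ℕ) = i
  · subst hij; simp
  · simp [Fin.ext_iff, hij, Ne.symm hij]

lemma normSq_one_add_conj_mul_sub_normSq_add (w v : ℂ) :
    normSq (1 + conj w * v) - normSq (v + w) = (1 - normSq v) * (1 - normSq w) := by
  simp only [normSq_apply, add_re, add_im, mul_re, mul_im, one_re, one_im, conj_re, conj_im]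
  ring

lemma normSq_add_lt {w v : ℂ} (hw : ‖w‖ < 1) (hv : ‖v‖ < 1) :
    normSq (v + w) < normSq (1 + conj w * v) := by
  have hw' : normSq w < 1 := by rw [← Complex.sq_norm]; nlinarith [norm_nonneg w]
  have hv' : normSq v < 1 := by rw [← Complex.sq_norm]; nlinarith [norm_nonneg v]
  nlinarith [normSq_one_add_conj_mul_sub_normSq_add w v,
    mul_pos (sub_pos.2 hv') (sub_pos.2 hw')]

lemma one_add_conj_mul_ne_zero {w v : ℂ} (hw : ‖w‖ < 1) (hv : ‖v‖ < 1) :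
    1 + conj w * v ≠ 0 :=
  normSq_pos.mp ((normSq_nonneg _).trans_lt (normSq_add_lt hw hv))

lemma norm_mobius_lt_one {w z v : ℂ} (hw : ‖w‖ < 1) (hz : ‖z‖ = 1) (hv : ‖v‖ < 1) :
    ‖mobius w z v‖ < 1 := by
  have hD := one_add_conj_mul_ne_zero hw hv
  rw [mobius, norm_div, norm_mul, hz, one_mul, div_lt_one (norm_pos_iff.mpr hD)]
  refine lt_of_pow_lt_pow_left₀ 2 (norm_nonneg _) ?_
  rw [Complex.sq_norm, Complex.sq_norm]
  exact normSq_add_lt hw hv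

lemma hasDerivAt_div_affine {𝕜 : Type*} [NontriviallyNormedField 𝕜] {a b c d s : 𝕜}
    (h : c + s * d ≠ 0) :
    HasDerivAt (fun u => (a + u * b) / (c + u * d)) ((b * c - a * d) / (c + s * d) ^ 2) s := by
  have := (((hasDerivAt_id s).mul_const b).const_add a).div
    (((hasDerivAt_id s).mul_const d).const_add c) h
  exact this.congr_deriv (by simp only [id]; ring)

lemma hasDerivAt_div_affine_sq {𝕜 : Type*} [NontriviallyNormedField 𝕜] {c d s : 𝕜} (k : 𝕜)
    (h : c + s * d ≠ 0) :
    HasDerivAt (fun u => k / (c + u * d) ^ 2) (-2 * d * k / (c + s * d) ^ 3) s := by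
  have := (hasDerivAt_const s k).fun_div
    ((((hasDerivAt_id s).mul_const d).const_add c).fun_pow 2) (pow_ne_zero 2 h)
  exact this.congr_deriv (by simp only [id]; field_simp; ring)

lemma hasDerivAt_mobius {w v : ℂ} (z : ℂ) (h : 1 + conj w * v ≠ 0) :
    HasDerivAt (mobius w z) (z * (1 - w * conj w) / (1 + conj w * v) ^ 2) v := by
  have hf : mobius w z = fun u => (z * w + u * z) / (1 + u * conj w) := by
    funext u; simp only [mobius]; ring
  rw [hf]
  exact (hasDerivAt_div_affine (by rwa [mul_comm] at h)).congr_deriv (by ring)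

lemma differentiableOn_mobius {w : ℂ} (z : ℂ) (hw : ‖w‖ < 1) :
    DifferentiableOn ℂ (mobius w z) (ball 0 1) := fun _ hv =>
  (hasDerivAt_mobius z (one_add_conj_mul_ne_zero hw (mem_ball_zero_iff.mp hv))).differentiableAt
    |>.differentiableWithinAt

lemma mapsTo_mobiusComp {l : List (ℂ × ℂ)} (hl : ∀ p ∈ l, ‖p.1‖ < 1 ∧ ‖p.2‖ = 1) :
    MapsTo (mobiusComp l) (ball 0 1) (ball 0 1) := by
  induction l with
  | nil => exact mapsTo_id _
  | cons p l ih =>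
    have hp := hl p List.mem_cons_self
    refine MapsTo.comp (f := mobiusComp l) (g := mobius p.1 p.2) (fun v hv => ?_)
      (ih fun q hq => hl q (List.mem_cons_of_mem _ hq))
    exact mem_ball_zero_iff.mpr (norm_mobius_lt_one hp.1 hp.2 (mem_ball_zero_iff.mp hv))

lemma differentiableOn_mobiusComp {l : List (ℂ × ℂ)} (hl : ∀ p ∈ l, ‖p.1‖ < 1 ∧ ‖p.2‖ = 1) :
    DifferentiableOn ℂ (mobiusComp l) (ball 0 1) := by
  induction l with
  | nil => exact differentiableOn_id
  | cons p l ih =>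
    have hl' : ∀ q ∈ l, ‖q.1‖ < 1 ∧ ‖q.2‖ = 1 := fun q hq => hl q (List.mem_cons_of_mem _ hq)
    exact DifferentiableOn.comp (f := mobiusComp l) (g := mobius p.1 p.2)
      (differentiableOn_mobius _ (hl p List.mem_cons_self).1) (ih hl') (mapsTo_mobiusComp hl')

lemma norm_PsiList_lt_one {l : List (ℂ × ℂ)} (hl : ∀ p ∈ l, ‖p.1‖ < 1 ∧ ‖p.2‖ = 1) :
    ‖PsiList l‖ < 1 := by
  simpa [PsiList_eq_mobiusComp] using mapsTo_mobiusComp hl (mem_ball_self one_pos)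

lemma iteratedDeriv_two_comp {F : ℂ → ℂ} {S : Set ℂ} (hS : IsOpen S)
    (hF : DifferentiableOn ℂ F S) {γ γ' : ℝ → ℂ} {γ'' : ℂ} {t : ℝ}
    (hγ : ∀ᶠ s in 𝓝 t, HasDerivAt γ (γ' s) s)
    (hγ' : HasDerivAt γ' γ'' t) (ht : γ t ∈ S) :
    iteratedDeriv 2 (fun s => F (γ s)) t =
      deriv (deriv F) (γ t) * γ' t ^ 2 + deriv F (γ t) * γ'' := by
  have hF' : DifferentiableOn ℂ (deriv F) S := ((hF.analyticOnNhd hS).deriv).differentiableOn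
  have hγS : ∀ᶠ s in 𝓝 t, γ s ∈ S :=
    hγ.self_of_nhds.continuousAt.preimage_mem_nhds (hS.mem_nhds ht)
  have hfirst : deriv (fun s => F (γ s)) =ᶠ[𝓝 t] fun s => deriv F (γ s) * γ' s := by
    filter_upwards [hγ, hγS] with s hs hsS
    exact ((hF.differentiableAt (hS.mem_nhds hsS)).hasDerivAt.comp s hs).deriv
  have hsecond : HasDerivAt (fun s => deriv F (γ s)) (deriv (deriv F) (γ t) * γ' t) t :=
    (hF'.differentiableAt (hS.mem_nhds ht)).hasDerivAt.comp t hγ.self_of_nhds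
  rw [iteratedDeriv_succ, iteratedDeriv_one, hfirst.deriv_eq, (hsecond.fun_mul hγ').deriv]
  ring

lemma iteratedDeriv_two_comp_mobius_line {F : ℂ → ℂ} (hF : DifferentiableOn ℂ F (ball 0 1))
    {w z v : ℂ} (e : ℂ) (t₀ : ℝ) (hw : ‖w‖ < 1) (hz : ‖z‖ = 1) (hv : ‖v‖ < 1) :
    iteratedDeriv 2 (fun t : ℝ => F (mobius (w + (t - t₀) * e) z v)) t₀ =
      deriv (deriv F) (mobius w z v) *
          (z * (e * (1 + conj w * v) - conj e * v * (v + w)) / (1 + conj w * v) ^ 2) ^ 2 +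
        deriv F (mobius w z v) * (-2 * (conj e * v) *
          (z * (e * (1 + conj w * v) - conj e * v * (v + w))) / (1 + conj w * v) ^ 3) := by
  set a := z * (v + w - t₀ * e)
  set b := z * e
  set c := 1 + (conj w - t₀ * conj e) * v
  set d := conj e * v
  have hline : ∀ t : ℝ, mobius (w + (t - t₀) * e) z v = (a + t * b) / (c + t * d) := by
    intro t; simp only [mobius, map_add, map_mul, map_sub, conj_ofReal]; ring
  have hg : (a + t₀ * b) / (c + t₀ * d) = mobius w z v := by rw [← hline]; simp
  have hc : c + t₀ * d = 1 + conj w * v := by ring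
  have hK : b * c - a * d = z * (e * (1 + conj w * v) - conj e * v * (v + w)) := by ring
  have hne : ∀ᶠ t : ℝ in 𝓝 t₀, c + t * d ≠ 0 := by
    refine ContinuousAt.eventually_ne (by fun_prop) ?_
    rw [hc]; exact one_add_conj_mul_ne_zero hw hv
  simp only [hline]
  rw [iteratedDeriv_two_comp isOpen_ball hF
    (hne.mono fun t ht => (hasDerivAt_div_affine ht).comp_ofReal)
    (hasDerivAt_div_affine_sq _ hne.self_of_nhds).comp_ofReal
    (by rw [hg]; exact mem_ball_zero_iff.mpr (norm_mobius_lt_one hw hz hv)), hg, hc, hK]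

lemma laplacian_comp_mobius {F : ℂ → ℂ} (hF : DifferentiableOn ℂ F (ball 0 1)) {a c : ℝ}
    {z v : ℂ} (hw : ‖(a : ℂ) + c * I‖ < 1) (hz : ‖z‖ = 1) (hv : ‖v‖ < 1) :
    iteratedDeriv 2 (fun t : ℝ => F (mobius (t + c * I) z v)) a +
        iteratedDeriv 2 (fun t : ℝ => F (mobius (a + t * I) z v)) c =
      -4 * (z * v / (1 + conj ((a : ℂ) + c * I) * v) ^ 2 *
        (deriv F (mobius (a + c * I) z v) +
          mobius (a + c * I) z v * deriv (deriv F) (mobius (a + c * I) z v))) := by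
  set w : ℂ := a + c * I
  have hx : (fun t : ℝ => F (mobius (t + c * I) z v)) =
      fun t : ℝ => F (mobius (w + (t - a) * 1) z v) := by
    funext t; congr 2; ring
  have hy : (fun t : ℝ => F (mobius (a + t * I) z v)) =
      fun t : ℝ => F (mobius (w + (t - c) * I) z v) := by
    funext t; congr 2; ring
  have hD := one_add_conj_mul_ne_zero hw hv
  rw [hx, hy, iteratedDeriv_two_comp_mobius_line hF 1 a hw hz hv,
    iteratedDeriv_two_comp_mobius_line hF I c hw hz hv, map_one, conj_I]
  set D := 1 + conj w * v
  set F₁ := deriv F (mobius w z v)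
  set F₂ := deriv (deriv F) (mobius w z v)
  rw [show mobius w z v = z * (v + w) / D from rfl]
  field_simp
  linear_combination
    z * (D + v * (v + w)) * (z * F₂ * (D + v * (v + w)) + 2 * v * D * F₁) * I_sq

lemma hasDerivAt_comp_exp_I_mul {G : ℂ → ℂ} {u : ℂ} {θ : ℝ}
    (hG : DifferentiableAt ℂ G (exp (I * θ) * u)) :
    HasDerivAt (fun t : ℝ => G (exp (I * t) * u))
      (I * (exp (I * θ) * u) * deriv G (exp (I * θ) * u)) θ := by
  have hrot : HasDerivAt (fun t : ℝ => exp (I * t) * u) (I * (exp (I * θ) * u)) θ :=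
    ((((hasDerivAt_id θ).ofReal_comp).const_mul I).cexp.mul_const u).congr_deriv (by simp; ring)
  exact (hG.hasDerivAt.comp θ hrot).congr_deriv (mul_comm _ _)

lemma hasDerivAt_comp_mobius_rotation {G : ℂ → ℂ} (hG : DifferentiableOn ℂ G (ball 0 1))
    {w v : ℂ} (hw : ‖w‖ < 1) (hv : ‖v‖ < 1) (θ : ℝ) :
    HasDerivAt (fun t : ℝ => G (mobius w (exp (I * t)) v))
      (I * mobius w (exp (I * θ)) v * deriv G (mobius w (exp (I * θ)) v)) θ := by
  have hmem := norm_mobius_lt_one hw (norm_exp_I_mul_ofReal θ) hv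
  simp only [mobius, mul_div_assoc] at hmem ⊢
  exact hasDerivAt_comp_exp_I_mul
    (hG.differentiableAt (isOpen_ball.mem_nhds (by simpa using hmem)))

lemma deriv_deriv_comp_mobius_rotations {F : ℂ → ℂ} (hF : DifferentiableOn ℂ F (ball 0 1))
    {w w' u v : ℂ} (hw : ‖w‖ < 1) (hw' : ‖w'‖ < 1) (hu : ‖u‖ < 1) (θ₁ θ₂ : ℝ)
    (hv : mobius w' (exp (I * θ₂)) u = v) :
    deriv (fun s : ℝ =>
        deriv (fun t : ℝ => F (mobius w (exp (I * t)) (mobius w' (exp (I * s)) u))) θ₁) θ₂ =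
      -(1 - w * conj w) * (exp (I * θ₁) * v / (1 + conj w * v) ^ 2 *
        (deriv F (mobius w (exp (I * θ₁)) v) +
          mobius w (exp (I * θ₁)) v * deriv (deriv F) (mobius w (exp (I * θ₁)) v))) := by
  set z := exp (I * θ₁)
  have hF' : DifferentiableOn ℂ (deriv F) (ball 0 1) :=
    ((hF.analyticOnNhd isOpen_ball).deriv).differentiableOn
  have hΦ : ∀ V : ℂ, ‖V‖ < 1 → HasDerivAt (fun V => I * mobius w z V * deriv F (mobius w z V))
      (I * (z * (1 - w * conj w) / (1 + conj w * V) ^ 2) * deriv F (mobius w z V) +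
        I * mobius w z V * (deriv (deriv F) (mobius w z V) *
          (z * (1 - w * conj w) / (1 + conj w * V) ^ 2))) V := fun V hV => by
    have hm := hasDerivAt_mobius z (one_add_conj_mul_ne_zero hw hV)
    have hmem := norm_mobius_lt_one hw (norm_exp_I_mul_ofReal θ₁) hV
    exact (hm.const_mul I).fun_mul ((hF'.differentiableAt
      (isOpen_ball.mem_nhds (mem_ball_zero_iff.mpr hmem))).hasDerivAt.comp V hm)
  have hinner : (fun s : ℝ =>
      deriv (fun t : ℝ => F (mobius w (exp (I * t)) (mobius w' (exp (I * s)) u))) θ₁) =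
      fun s : ℝ => I * mobius w z (mobius w' (exp (I * s)) u) *
        deriv F (mobius w z (mobius w' (exp (I * s)) u)) := funext fun s =>
    (hasDerivAt_comp_mobius_rotation hF hw
      (norm_mobius_lt_one hw' (norm_exp_I_mul_ofReal s) hu) θ₁).deriv
  have hvb : ‖v‖ < 1 := hv ▸ norm_mobius_lt_one hw' (norm_exp_I_mul_ofReal θ₂) hu
  rw [hinner, (hasDerivAt_comp_mobius_rotation (fun V hV => (hΦ V
      (mem_ball_zero_iff.mp hV)).differentiableAt.differentiableWithinAt) hw' hu θ₂).deriv, hv,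
    (hΦ v hvb).deriv]
  linear_combination v * (z * (1 - w * conj w) / (1 + conj w * v) ^ 2) *
    (deriv F (mobius w z v) + mobius w z v * deriv (deriv F) (mobius w z v)) * I_sq

noncomputable def ufunList (n : ℕ) (x y ξ : Fin n → ℝ) : List (ℂ × ℂ) :=
  List.ofFn fun j : Fin n => ((x j : ℂ) + (y j : ℂ) * I, exp (I * (ξ j : ℂ)))

lemma length_ufunList (n : ℕ) (x y ξ : Fin n → ℝ) : (ufunList n x y ξ).length = n := by
  simp [ufunList]

lemma Ufun_update_re {n : ℕ} (x y ξ : Fin n → ℝ) (j : Fin n) (t : ℝ) :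
    Ufun n (Function.update x j t) y ξ = mobiusComp ((ufunList n x y ξ).take j)
      (mobius (t + y j * I) (exp (I * ξ j)) (PsiList ((ufunList n x y ξ).drop (j + 1)))) := by
  have hset : ufunList n (Function.update x j t) y ξ =
      (ufunList n x y ξ).set j ((t : ℂ) + y j * I, exp (I * ξ j)) :=
    List.ofFn_apply_update (fun k (r : ℝ) => ((r : ℂ) + y k * I, exp (I * ξ k))) x j t
  rw [Ufun, ← ufunList, hset, PsiList_set (by simp [length_ufunList])]

lemma Ufun_update_im {n : ℕ} (x y ξ : Fin n → ℝ) (j : Fin n) (t : ℝ) :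
    Ufun n x (Function.update y j t) ξ = mobiusComp ((ufunList n x y ξ).take j)
      (mobius (x j + t * I) (exp (I * ξ j)) (PsiList ((ufunList n x y ξ).drop (j + 1)))) := by
  have hset : ufunList n x (Function.update y j t) ξ =
      (ufunList n x y ξ).set j ((x j : ℂ) + t * I, exp (I * ξ j)) :=
    List.ofFn_apply_update (fun k (r : ℝ) => ((x k : ℂ) + r * I, exp (I * ξ k))) y j t
  rw [Ufun, ← ufunList, hset, PsiList_set (by simp [length_ufunList])]

lemma Ufun_update_update_arg {n : ℕ} (x y ξ : Fin n → ℝ) (j : Fin n) (h : (j : ℕ) + 1 < n)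
    (s t : ℝ) :
    Ufun n x y (Function.update (Function.update ξ ⟨j + 1, h⟩ s) j t) =
      mobiusComp ((ufunList n x y ξ).take j) (mobius (x j + y j * I) (exp (I * t))
        (mobius (x ⟨j + 1, h⟩ + y ⟨j + 1, h⟩ * I) (exp (I * s))
          (PsiList ((ufunList n x y ξ).drop (j + 2))))) := by
  have hset : ufunList n x y (Function.update (Function.update ξ ⟨j + 1, h⟩ s) j t) =
      ((ufunList n x y ξ).set (j + 1) ((x ⟨j + 1, h⟩ : ℂ) + y ⟨j + 1, h⟩ * I, exp (I * s))).set
        j ((x j : ℂ) + y j * I, exp (I * t)) := by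
    rw [ufunList, List.ofFn_apply_update (fun k (r : ℝ) => ((x k : ℂ) + y k * I, exp (I * r))),
      List.ofFn_apply_update (fun k (r : ℝ) => ((x k : ℂ) + y k * I, exp (I * r)))]
    rfl
  rw [Ufun, ← ufunList, hset, PsiList_set_set (by simpa [length_ufunList] using h)]

lemma PsiList_drop_ufunList {n : ℕ} (x y ξ : Fin n → ℝ) (k : Fin n) :
    PsiList ((ufunList n x y ξ).drop k) = mobius (x k + y k * I) (exp (I * ξ k))
      (PsiList ((ufunList n x y ξ).drop (k + 1))) := by
  rw [List.drop_eq_getElem_cons (by simp [length_ufunList])]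
  simp [PsiList, mobius, ufunList]

theorem statement13_general (n : ℕ) (x y ξ : Fin n → ℝ)
    (hxy : ∀ j, (x j) ^ 2 + (y j) ^ 2 < 1) (j : Fin n) :
    -(((1 - (x j) ^ 2 - (y j) ^ 2) / 4 : ℝ) : ℂ) *
        (iteratedDeriv 2 (fun t : ℝ => Ufun n (Function.update x j t) y ξ) (x j) +
         iteratedDeriv 2 (fun t : ℝ => Ufun n x (Function.update y j t) ξ) (y j)) +
      (if h : (j : ℕ) + 1 < n then
          deriv (fun s : ℝ =>
              deriv (fun t : ℝ =>
                  Ufun n x y (Function.update (Function.update ξ ⟨(j : ℕ) + 1, h⟩ s) j t))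
                (ξ j))
            (ξ ⟨(j : ℕ) + 1, h⟩)
        else 0) = 0 := by
  set L := ufunList n x y ξ
  have hw : ∀ k, ‖(x k : ℂ) + y k * I‖ < 1 := fun k => by
    rw [← sq_lt_one_iff₀ (norm_nonneg _), Complex.sq_norm, normSq_add_mul_I]; exact hxy k
  have hL : ∀ p ∈ L, ‖p.1‖ < 1 ∧ ‖p.2‖ = 1 := by
    simp only [L, ufunList, List.forall_mem_ofFn_iff]
    exact fun k => ⟨hw k, norm_exp_I_mul_ofReal _⟩
  have hLdrop : ∀ i, ‖PsiList (L.drop i)‖ < 1 := fun i =>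
    norm_PsiList_lt_one fun p hp => hL p (List.mem_of_mem_drop hp)
  have hF := differentiableOn_mobiusComp (l := L.take j) fun p hp =>
    hL p (List.mem_of_mem_take hp)
  simp only [Ufun_update_re, Ufun_update_im]
  rw [laplacian_comp_mobius hF (hw j) (norm_exp_I_mul_ofReal _) (hLdrop _)]
  split_ifs with h
  · simp only [Ufun_update_update_arg]
    rw [deriv_deriv_comp_mobius_rotations hF (hw j) (hw _) (hLdrop _) _ _
      (PsiList_drop_ufunList x y ξ ⟨j + 1, h⟩).symm, mul_conj, normSq_add_mul_I]
    push_cast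
    ring
  · rw [List.drop_eq_nil_of_le (by simp [L, length_ufunList]; omega)]
    simp [PsiList]

/-- for every `1 ≤ j ≤ n` and every point of `Dⁿ × ℝⁿ`,
`-((1-x_j²-y_j²)/4)(∂²U/∂x_j² + ∂²U/∂y_j²) + ∂²U/∂ξ_{j+1}∂ξ_j = 0`,
with derivatives in `ξ_{n+1}` interpreted as `0`. -/
theorem statement13 (n : ℕ) (hn : 1 ≤ n) (x y ξ : Fin n → ℝ)
    (hxy : ∀ j, (x j) ^ 2 + (y j) ^ 2 < 1) (j : Fin n) :
    -(((1 - (x j) ^ 2 - (y j) ^ 2) / 4 : ℝ) : ℂ) *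
        (iteratedDeriv 2 (fun t : ℝ => Ufun n (Function.update x j t) y ξ) (x j) +
         iteratedDeriv 2 (fun t : ℝ => Ufun n x (Function.update y j t) ξ) (y j)) +
      (if h : (j : ℕ) + 1 < n then
          deriv (fun s : ℝ =>
              deriv (fun t : ℝ =>
                  Ufun n x y (Function.update (Function.update ξ ⟨(j : ℕ) + 1, h⟩ s) j t))
                (ξ j))
            (ξ ⟨(j : ℕ) + 1, h⟩)
        else 0) = 0 :=
  statement13_general n x y ξ hxy j
end
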